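/- arXiv:1208.3140 — 5 statements merged into one kernel-verified Lean document; each statement's English description precedes it below -/
import Mathlib

section
/- Conservation equation for evolutionary systems (Theorem 4.2, regular-solution form): Suppose y : (0,∞) → H is locally Bochner square-integrable, y(t) ∈ D(A) for almost every t > 0 with t ↦ A y(t) locally Bochner square-integrable, and suppose there are a function z : (0,∞) → H and a locally Bochner square-integrable g : (0,∞) → H such that z(b) = z(a) + ∫_a^b g(t) dt for all 0 < a ≤ b, z(t) = P₀ y(t) for almost every t > 0, and M₀ g(t) + M₁ y(t) + A y(t) = 0 for almost every t > 0. Then for all 0 < a ≤ b one has ∫_a^b Re⟨y(t) | M₁ y(t)⟩_H dt = ½⟨z(a) | M₀ z(a)⟩_H − ½⟨z(b) | M₀ z(b)⟩_H. -/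
open MeasureTheory
open scoped ComplexInnerProductSpace LinearPMap

/-- The orthogonal projection of `H` onto the closure of the range of a bounded operator
`M : H →L[ℂ] H`, viewed as a bounded operator on `H`. -/
noncomputable def rangeProj {H : Type*} [NormedAddCommGroup H] [InnerProductSpace ℂ H]
    [CompleteSpace H] (M : H →L[ℂ] H) : H →L[ℂ] H :=
  letI K := (LinearMap.range (M : H →ₗ[ℂ] H)).topologicalClosure
  haveI : CompleteSpace K := (Submodule.isClosed_topologicalClosure _).completeSpace_coe
  K.subtypeL.comp (K.orthogonalProjection)

/-!
Pairing the equation with `y` and using `Re⟪y, A y⟫ = 0` (skew-adjointness) and `M₀ P₀ = M₀`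
gives `Re⟪y, M₁ y⟫ = -Re⟪M₀ z, g⟫` a.e. Since `z` is a primitive of `g`, the product rule for the
bounded symmetric form `(x, x') ↦ Re⟪x, M₀ x'⟫` integrates `2 Re⟪M₀ z, g⟫` over `[a, b]` to
`Re⟪z b, M₀ z b⟫ - Re⟪z a, M₀ z a⟫`. The product rule for primitives of merely integrable functions
comes from Fubini: the square `[a, b]²` splits into the triangles `s ≤ t` and `t < s`.
-/

open Set
open scoped Interval

section Triangle

variable {E : Type*} [NormedAddCommGroup E] [NormedSpace ℝ E] {μ ν : Measure ℝ} {f : ℝ × ℝ → E}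

theorem integral_indicator_fst_le (t : ℝ) :
    ∫ s, {p : ℝ × ℝ | p.1 ≤ p.2}.indicator f (s, t) ∂μ = ∫ s in Iic t, f (s, t) ∂μ :=
  integral_indicator (f := fun s ↦ f (s, t)) measurableSet_Iic

theorem integral_indicator_snd_lt (s : ℝ) :
    ∫ t, {p : ℝ × ℝ | p.2 < p.1}.indicator f (s, t) ∂ν = ∫ t in Iio s, f (s, t) ∂ν :=
  integral_indicator (f := fun t ↦ f (s, t)) measurableSet_Iio

theorem integrable_setIntegral_Iic [SFinite μ] [SFinite ν] (hf : Integrable f (μ.prod ν)) :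
    Integrable (fun t ↦ ∫ s in Iic t, f (s, t) ∂μ) ν := by
  simpa only [integral_indicator_fst_le] using
    (hf.indicator (measurableSet_le measurable_fst measurable_snd)).integral_prod_right

theorem integrable_setIntegral_Iio [SFinite ν] (hf : Integrable f (μ.prod ν)) :
    Integrable (fun s ↦ ∫ t in Iio s, f (s, t) ∂ν) μ := by
  simpa only [integral_indicator_snd_lt] using
    (hf.indicator (measurableSet_lt measurable_snd measurable_fst)).integral_prod_left

theorem setIntegral_prod_fst_le [SFinite μ] [SFinite ν] (hf : Integrable f (μ.prod ν)) :
    ∫ p in {p : ℝ × ℝ | p.1 ≤ p.2}, f p ∂μ.prod ν = ∫ t, ∫ s in Iic t, f (s, t) ∂μ ∂ν := by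
  have hD : MeasurableSet {p : ℝ × ℝ | p.1 ≤ p.2} := measurableSet_le measurable_fst measurable_snd
  simp only [← integral_indicator hD, integral_prod_symm _ (hf.indicator hD),
    integral_indicator_fst_le]

theorem setIntegral_prod_snd_lt [SFinite μ] [SFinite ν] (hf : Integrable f (μ.prod ν)) :
    ∫ p in {p : ℝ × ℝ | p.2 < p.1}, f p ∂μ.prod ν = ∫ s, ∫ t in Iio s, f (s, t) ∂ν ∂μ := by
  have hD : MeasurableSet {p : ℝ × ℝ | p.2 < p.1} := measurableSet_lt measurable_snd measurable_fst
  simp only [← integral_indicator hD, integral_prod _ (hf.indicator hD),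
    integral_indicator_snd_lt]

end Triangle

namespace ContinuousLinearMap

variable {E F G : Type*} [NormedAddCommGroup E] [NormedSpace ℝ E]
  [NormedAddCommGroup F] [NormedSpace ℝ F] [NormedAddCommGroup G] [NormedSpace ℝ G]
  (B : E →L[ℝ] F →L[ℝ] G) {g : ℝ → E} {h : ℝ → F} {a b : ℝ}

theorem setIntegral_Iic_bilin [CompleteSpace E] [CompleteSpace G] (hg : IntegrableOn g (Ioc a b))
    {t : ℝ} (ht : t ∈ Ioc a b) :
    ∫ s in Iic t, B (g s) (h t) ∂volume.restrict (Ioc a b) = B (∫ s in a..t, g s) (h t) := by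
  rw [Measure.restrict_restrict measurableSet_Iic, inter_comm, Ioc_inter_Iic, min_eq_right ht.2,
    intervalIntegral.integral_of_le ht.1.le]
  exact (B.flip (h t)).integral_comp_comm (hg.mono_set (Ioc_subset_Ioc_right ht.2))

theorem setIntegral_Iio_bilin [CompleteSpace F] [CompleteSpace G] (hh : IntegrableOn h (Ioc a b))
    {s : ℝ} (hs : s ∈ Ioc a b) :
    ∫ t in Iio s, B (g s) (h t) ∂volume.restrict (Ioc a b) = B (g s) (∫ t in a..s, h t) := by
  have hIoo : Iio s ∩ Ioc a b = Ioo a s := by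
    ext t
    simp only [mem_inter_iff, mem_Iio, mem_Ioc, mem_Ioo]
    exact ⟨fun ⟨hts, hat, _⟩ ↦ ⟨hat, hts⟩, fun ⟨hat, hts⟩ ↦ ⟨hts, hat, hts.le.trans hs.2⟩⟩
  rw [Measure.restrict_restrict measurableSet_Iio, hIoo, ← integral_Ioc_eq_integral_Ioo,
    intervalIntegral.integral_of_le hs.1.le]
  exact (B (g s)).integral_comp_comm (hh.mono_set (Ioc_subset_Ioc_right hs.2))

theorem integrable_bilin_prod (hg : IntegrableOn g (Ioc a b)) (hh : IntegrableOn h (Ioc a b)) :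
    Integrable (fun p : ℝ × ℝ ↦ B (g p.1) (h p.2))
      ((volume.restrict (Ioc a b)).prod (volume.restrict (Ioc a b))) :=
  hg.op_fst_snd (by fun_prop) ⟨‖B‖, B.le_opNorm₂⟩ hh

theorem integrableOn_bilin_primitive_left [CompleteSpace E] [CompleteSpace G]
    (hg : IntegrableOn g (Ioc a b)) (hh : IntegrableOn h (Ioc a b)) :
    IntegrableOn (fun t ↦ B (∫ s in a..t, g s) (h t)) (Ioc a b) :=
  (integrable_setIntegral_Iic (B.integrable_bilin_prod hg hh)).congr <|
    (ae_restrict_mem measurableSet_Ioc).mono fun _ ↦ B.setIntegral_Iic_bilin hg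

theorem integrableOn_bilin_primitive_right [CompleteSpace F] [CompleteSpace G]
    (hg : IntegrableOn g (Ioc a b)) (hh : IntegrableOn h (Ioc a b)) :
    IntegrableOn (fun t ↦ B (g t) (∫ s in a..t, h s)) (Ioc a b) :=
  (integrable_setIntegral_Iio (B.integrable_bilin_prod hg hh)).congr <|
    (ae_restrict_mem measurableSet_Ioc).mono fun _ ↦ B.setIntegral_Iio_bilin hh

theorem intervalIntegral_bilin_primitive [CompleteSpace E] [CompleteSpace F] [CompleteSpace G]
    (hab : a ≤ b) (hg : IntegrableOn g (Ioc a b)) (hh : IntegrableOn h (Ioc a b)) :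
    ∫ t in a..b, (B (∫ s in a..t, g s) (h t) + B (g t) (∫ s in a..t, h s)) =
      B (∫ t in a..b, g t) (∫ t in a..b, h t) := by
  have hΦ := B.integrable_bilin_prod hg hh
  have hD : MeasurableSet {p : ℝ × ℝ | p.1 ≤ p.2} := measurableSet_le measurable_fst measurable_snd
  have hDc : {p : ℝ × ℝ | p.1 ≤ p.2}ᶜ = {p | p.2 < p.1} := by ext; simp
  simp only [intervalIntegral.integral_of_le hab]
  rw [← integral_prod_bilin B hg hh, ← integral_add_compl hD hΦ, hDc, setIntegral_prod_fst_le hΦ,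
    setIntegral_prod_snd_lt hΦ, integral_add (B.integrableOn_bilin_primitive_left hg hh)
      (B.integrableOn_bilin_primitive_right hg hh)]
  congr 1
  · exact integral_congr_ae ((ae_restrict_mem measurableSet_Ioc).mono fun _ ht ↦
      (B.setIntegral_Iic_bilin hg ht).symm)
  · exact integral_congr_ae ((ae_restrict_mem measurableSet_Ioc).mono fun _ hs ↦
      (B.setIntegral_Iio_bilin hh hs).symm)

theorem bilin_sub_bilin_eq_intervalIntegral [CompleteSpace E] [CompleteSpace F] [CompleteSpace G]
    (hab : a ≤ b) (hg : IntegrableOn g (Ioc a b)) (hh : IntegrableOn h (Ioc a b))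
    {z : ℝ → E} {w : ℝ → F} (hz : ∀ t ∈ Icc a b, z t = z a + ∫ s in a..t, g s)
    (hw : ∀ t ∈ Icc a b, w t = w a + ∫ s in a..t, h s) :
    B (z b) (w b) - B (z a) (w a) = ∫ t in a..b, (B (z t) (h t) + B (g t) (w t)) := by
  have hinterval {f : ℝ → G} : IntegrableOn f (Ioc a b) → IntervalIntegrable f volume a b :=
    (intervalIntegrable_iff_integrableOn_Ioc_of_le hab).2
  have hgi := (intervalIntegrable_iff_integrableOn_Ioc_of_le hab).2 hg
  have hhi := (intervalIntegrable_iff_integrableOn_Ioc_of_le hab).2 hh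
  have hconst : IntervalIntegrable (fun t ↦ B (z a) (h t) + B.flip (w a) (g t)) volume a b :=
    hinterval (((B (z a)).integrable_comp hh).add ((B.flip (w a)).integrable_comp hg))
  have hprim : IntervalIntegrable
      (fun t ↦ B (∫ s in a..t, g s) (h t) + B (g t) (∫ s in a..t, h s)) volume a b :=
    hinterval ((B.integrableOn_bilin_primitive_left hg hh).add
      (B.integrableOn_bilin_primitive_right hg hh))
  have hb : b ∈ Icc a b := right_mem_Icc.2 hab
  calc B (z b) (w b) - B (z a) (w a)
      = (B (z a) (∫ t in a..b, h t) + B.flip (w a) (∫ t in a..b, g t)) +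
          B (∫ t in a..b, g t) (∫ t in a..b, h t) := by
        simp only [hz b hb, hw b hb, map_add, add_apply, flip_apply]
        abel
    _ = (∫ t in a..b, (B (z a) (h t) + B.flip (w a) (g t))) +
          ∫ t in a..b, (B (∫ s in a..t, g s) (h t) + B (g t) (∫ s in a..t, h s)) := by
        rw [B.intervalIntegral_bilin_primitive hab hg hh,
          intervalIntegral.integral_add (hinterval ((B (z a)).integrable_comp hh))
            (hinterval ((B.flip (w a)).integrable_comp hg)),
          (B (z a)).intervalIntegral_comp_comm hhi, (B.flip (w a)).intervalIntegral_comp_comm hgi]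
    _ = ∫ t in a..b, (B (z t) (h t) + B (g t) (w t)) := by
        rw [← intervalIntegral.integral_add hconst hprim]
        refine intervalIntegral.integral_congr fun t ht ↦ ?_
        rw [uIcc_of_le hab] at ht
        simp only [hz t ht, hw t ht, map_add, add_apply, flip_apply]
        abel

end ContinuousLinearMap

theorem LinearPMap.re_inner_apply_self_eq_zero {𝕜 E : Type*} [RCLike 𝕜] [NormedAddCommGroup E]
    [InnerProductSpace 𝕜 E] [CompleteSpace E] {A : E →ₗ.[𝕜] E}
    (hA : Dense (A.domain : Set E)) (hskew : A† = -A) (u : A.domain) :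
    RCLike.re (inner 𝕜 (u : E) (A u)) = 0 := by
  have h := LinearPMap.adjoint_isFormalAdjoint hA
  rw [hskew] at h
  have h := congrArg RCLike.re (h u u)
  rw [LinearPMap.neg_apply, inner_neg_left, _root_.map_neg, inner_re_symm] at h
  linarith

section ComplexHilbert

variable {H : Type*} [NormedAddCommGroup H] [InnerProductSpace ℂ H]

namespace ContinuousLinearMap

noncomputable def reInnerForm (M : H →L[ℂ] H) : H →L[ℝ] H →L[ℝ] ℝ :=
  compL ℝ H ℂ ℝ Complex.reCLM ∘L
    (isBoundedBilinearMap_inner (𝕜 := ℂ) (E := H)).toContinuousLinearMap.bilinearComp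
      (ContinuousLinearMap.id ℝ H) (M.restrictScalars ℝ)

theorem reInnerForm_apply (M : H →L[ℂ] H) (x x' : H) : M.reInnerForm x x' = (⟪x, M x'⟫).re :=
  rfl

end ContinuousLinearMap

variable [CompleteSpace H] {M : H →L[ℂ] H}

theorem IsSelfAdjoint.reInnerForm_comm (hM : IsSelfAdjoint M) (x x' : H) :
    M.reInnerForm x x' = M.reInnerForm x' x := by
  rw [M.reInnerForm_apply, M.reInnerForm_apply, ← ContinuousLinearMap.coe_coe, ← hM.isSymmetric,
    ← inner_conj_symm, Complex.conj_re]

theorem IsSelfAdjoint.apply_rangeProj (hM : IsSelfAdjoint M) (x : H) :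
    M (rangeProj M x) = M x := by
  set K := (LinearMap.range (M : H →ₗ[ℂ] H)).topologicalClosure
  have hx : x - rangeProj M x ∈ M.rangeᗮ := by
    rw [← Submodule.orthogonal_closure]
    exact K.sub_starProjection_mem_orthogonal x
  rw [M.orthogonal_range, hM.adjoint_eq, LinearMap.mem_ker, ContinuousLinearMap.coe_coe, map_sub,
    sub_eq_zero] at hx
  exact hx.symm

theorem IsSelfAdjoint.re_inner_apply_eq_of_add_add_eq_zero (hM : IsSelfAdjoint M)
    {M' : H →L[ℂ] H} {A : H →ₗ.[ℂ] H} (hA : Dense (A.domain : Set H)) (hskew : A† = -A)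
    {u : A.domain} {v : H} (h : M v + M' u + A u = 0) :
    (⟪(u : H), M' u⟫).re = -M.reInnerForm v u := by
  have hM' : M' u = -M v - A u := by linear_combination (norm := module) h
  have hskew_re : (⟪(u : H), A u⟫).re = 0 := LinearPMap.re_inner_apply_self_eq_zero hA hskew u
  rw [hM', inner_sub_right, inner_neg_right, Complex.sub_re, Complex.neg_re, hskew_re, sub_zero,
    ← M.reInnerForm_apply, hM.reInnerForm_comm]

end ComplexHilbert

theorem stmt0_general
    {H : Type*} [NormedAddCommGroup H] [InnerProductSpace ℂ H] [CompleteSpace H]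
    (M0 M1 : H →L[ℂ] H) (hM0 : IsSelfAdjoint M0)
    (A : H →ₗ.[ℂ] H) (hdense : Dense (A.domain : Set H)) (hskew : A† = -A)
    (y z g Ay : ℝ → H)
    (hg2 : ∀ a b : ℝ, 0 < a → a ≤ b → MemLp g 2 (volume.restrict (Set.Ioc a b)))
    (hyA : ∀ᵐ t ∂(volume.restrict (Set.Ioi (0 : ℝ))),
      ∃ h : y t ∈ A.domain, A ⟨y t, h⟩ = Ay t)
    (hzg : ∀ a b : ℝ, 0 < a → a ≤ b → z b = z a + ∫ t in a..b, g t)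
    (hzy : ∀ᵐ t ∂(volume.restrict (Set.Ioi (0 : ℝ))), z t = rangeProj M0 (y t))
    (heq : ∀ᵐ t ∂(volume.restrict (Set.Ioi (0 : ℝ))),
      M0 (g t) + M1 (y t) + Ay t = 0) :
    ∀ a b : ℝ, 0 < a → a ≤ b →
      (∫ t in a..b, (⟪y t, M1 (y t)⟫).re)
        = 1 / 2 * (⟪z a, M0 (z a)⟫).re - 1 / 2 * (⟪z b, M0 (z b)⟫).re := by
  intro a b ha hab
  have hg : IntegrableOn g (Ioc a b) := (hg2 a b ha hab).integrable one_le_two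
  have hz : ∀ t ∈ Icc a b, z t = z a + ∫ s in a..t, g s := fun t ht ↦ hzg a t ha ht.1
  have hpair : ∀ᵐ t, t ∈ Ι a b → (⟪y t, M1 (y t)⟫).re =
      -(1 / 2) * (M0.reInnerForm (z t) (g t) + M0.reInnerForm (g t) (z t)) := by
    filter_upwards [(ae_restrict_iff' measurableSet_Ioi).1 heq,
      (ae_restrict_iff' measurableSet_Ioi).1 hzy, (ae_restrict_iff' measurableSet_Ioi).1 hyA]
      with t heq hzy hyA ht
    have ht0 : t ∈ Ioi 0 := ha.trans (uIoc_of_le hab ▸ ht).1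
    obtain ⟨hdom, hAy⟩ := hyA ht0
    rw [hM0.reInnerForm_comm (z t), M0.reInnerForm_apply, hzy ht0, hM0.apply_rangeProj,
      ← M0.reInnerForm_apply,
      hM0.re_inner_apply_eq_of_add_add_eq_zero hdense hskew (u := ⟨y t, hdom⟩) (v := g t)
        (by rw [hAy]; exact heq ht0)]
    ring
  calc (∫ t in a..b, (⟪y t, M1 (y t)⟫).re)
      = ∫ t in a..b, -(1 / 2) * (M0.reInnerForm (z t) (g t) + M0.reInnerForm (g t) (z t)) :=
        intervalIntegral.integral_congr_ae hpair
    _ = 1 / 2 * (⟪z a, M0 (z a)⟫).re - 1 / 2 * (⟪z b, M0 (z b)⟫).re := by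
        rw [intervalIntegral.integral_const_mul,
          ← M0.reInnerForm.bilin_sub_bilin_eq_intervalIntegral hab hg hg hz hz,
          M0.reInnerForm_apply, M0.reInnerForm_apply]
        ring

/-- **Conservation equation for evolutionary systems** (regular-solution form).
Let `H` be a complex Hilbert space, `M₀` bounded selfadjoint, `M₁` bounded, `A` densely
defined and skew-selfadjoint, and `P₀` the orthogonal projection onto the closure of the
range of `M₀`.  Suppose `y : (0,∞) → H` is locally Bochner square-integrable, takes values
in `D(A)` a.e. with `t ↦ A y(t)` locally square-integrable, and there are `z` and a locally
square-integrable `g` with `z(b) = z(a) + ∫_a^b g` for `0 < a ≤ b`, `z = P₀ y` a.e. and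
`M₀ g(t) + M₁ y(t) + A y(t) = 0` a.e. on `(0,∞)`.  Then for all `0 < a ≤ b`,
`∫_a^b Re⟨y(t)|M₁ y(t)⟩ dt = ½⟨z(a)|M₀ z(a)⟩ − ½⟨z(b)|M₀ z(b)⟩`. -/
theorem stmt0
    {H : Type*} [NormedAddCommGroup H] [InnerProductSpace ℂ H] [CompleteSpace H]
    (M0 M1 : H →L[ℂ] H) (hM0 : IsSelfAdjoint M0)
    (A : H →ₗ.[ℂ] H) (hdense : Dense (A.domain : Set H)) (hskew : A† = -A)
    (y z g Ay : ℝ → H)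
    (hy2 : ∀ a b : ℝ, 0 < a → a ≤ b → MemLp y 2 (volume.restrict (Set.Ioc a b)))
    (hg2 : ∀ a b : ℝ, 0 < a → a ≤ b → MemLp g 2 (volume.restrict (Set.Ioc a b)))
    (hAy2 : ∀ a b : ℝ, 0 < a → a ≤ b → MemLp Ay 2 (volume.restrict (Set.Ioc a b)))
    (hyA : ∀ᵐ t ∂(volume.restrict (Set.Ioi (0 : ℝ))),
      ∃ h : y t ∈ A.domain, A ⟨y t, h⟩ = Ay t)
    (hzg : ∀ a b : ℝ, 0 < a → a ≤ b → z b = z a + ∫ t in a..b, g t)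
    (hzy : ∀ᵐ t ∂(volume.restrict (Set.Ioi (0 : ℝ))), z t = rangeProj M0 (y t))
    (heq : ∀ᵐ t ∂(volume.restrict (Set.Ioi (0 : ℝ))),
      M0 (g t) + M1 (y t) + Ay t = 0) :
    ∀ a b : ℝ, 0 < a → a ≤ b →
      (∫ t in a..b, (⟪y t, M1 (y t)⟫).re)
        = 1 / 2 * (⟪z a, M0 (z a)⟫).re - 1 / 2 * (⟪z b, M0 (z b)⟫).re :=
  stmt0_general M0 M1 hM0 A hdense hskew y z g Ay hg2 hyA hzg hzy heq
end

section
/- Adjoint of the operator F with boundary observation part (Theorem 5.8, reformulated via Riesz representatives): For each w ∈ V let ξ_w ∈ Y be the unique element with ⟨ξ_w | Gv⟩_Y = ⟨w | Cv⟩_V for all v ∈ D(G). Then for (ζ,w) ∈ Y ⊕ V one has (ζ,w) ∈ D(F*) if and only if ζ − ξ_w ∈ D(G*), and in that case F*(ζ,w) = G*(ξ_w − ζ). Here F* denotes the Hilbert-space adjoint of F, i.e. (ζ,w) ∈ D(F*) with F*(ζ,w) = h exactly when ⟨Fv | (ζ,w)⟩_{Y⊕V} = ⟨v | h⟩_X for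 all v ∈ D(G). -/
open scoped ComplexInnerProductSpace LinearPMap

/-- The operator `F : D(G) ⊆ X → Y ⊕ V`, `F v = (−G v, C v)`, where `Y ⊕ V` carries the
Hilbert space (`ℓ²`) product structure. -/
noncomputable def Fop {X Y V : Type*}
    [NormedAddCommGroup X] [InnerProductSpace ℂ X]
    [NormedAddCommGroup Y] [InnerProductSpace ℂ Y]
    [NormedAddCommGroup V] [InnerProductSpace ℂ V]
    (G : X →ₗ.[ℂ] Y) (C : G.domain →ₗ[ℂ] V) :
    X →ₗ.[ℂ] WithLp 2 (Y × V) where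
  domain := G.domain
  toFun := (WithLp.linearEquiv 2 ℂ (Y × V)).symm.toLinearMap ∘ₗ ((-G.toFun).prod C)

open scoped InnerProductSpace

/-!
Testing `F v = (−G v, C v)` against `(ζ, w)` gives `⟪w, C v⟫ − ⟪ζ, G v⟫`, which the defining
property of `ξ` rewrites as `⟪ξ − ζ, G v⟫`. So on the common domain `D(G)` the functionals
`v ↦ ⟪(ζ, w), F v⟫` and `v ↦ ⟪ξ − ζ, G v⟫` coincide, and the adjoints of two operators with the
same domain agree at any two points inducing the same functional.
-/

namespace LinearPMap

variable {𝕜 E F F' : Type*} [RCLike 𝕜]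
  [NormedAddCommGroup E] [InnerProductSpace 𝕜 E] [CompleteSpace E]
  [NormedAddCommGroup F] [InnerProductSpace 𝕜 F]
  [NormedAddCommGroup F'] [InnerProductSpace 𝕜 F']
  {A : E →ₗ.[𝕜] F} {B : E →ₗ.[𝕜] F'} {y : F} {y' : F'}

theorem mem_adjoint_domain_iff_of_inner_eq (hdom : A.domain = B.domain)
    (hinner : ∀ v (hA : v ∈ A.domain) (hB : v ∈ B.domain), ⟪y, A ⟨v, hA⟩⟫_𝕜 = ⟪y', B ⟨v, hB⟩⟫_𝕜) :
    y ∈ A†.domain ↔ y' ∈ B†.domain := by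
  obtain ⟨p, g⟩ := B
  subst hdom
  simp only [mem_adjoint_domain_iff]
  exact iff_of_eq (congrArg Continuous (funext fun v => hinner v v.2 v.2))

theorem adjoint_apply_eq_of_inner_eq [CompleteSpace F] [CompleteSpace F']
    (hdense : Dense (A.domain : Set E)) (hdom : A.domain = B.domain)
    (hinner : ∀ v (hA : v ∈ A.domain) (hB : v ∈ B.domain), ⟪y, A ⟨v, hA⟩⟫_𝕜 = ⟪y', B ⟨v, hB⟩⟫_𝕜)
    (hy : y ∈ A†.domain) (hy' : y' ∈ B†.domain) :
    A† ⟨y, hy⟩ = B† ⟨y', hy'⟩ := by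
  have hBdense : Dense (B.domain : Set E) := hdom ▸ hdense
  refine adjoint_apply_eq hdense _ fun v => ?_
  rw [adjoint_isFormalAdjoint hBdense ⟨y', hy'⟩ ⟨v, hdom ▸ v.2⟩, hinner]

end LinearPMap

theorem inner_Fop_apply {X Y V : Type*}
    [NormedAddCommGroup X] [InnerProductSpace ℂ X]
    [NormedAddCommGroup Y] [InnerProductSpace ℂ Y]
    [NormedAddCommGroup V] [InnerProductSpace ℂ V]
    (G : X →ₗ.[ℂ] Y) (C : G.domain →ₗ[ℂ] V) (ζ : Y) (w : V) (v : G.domain) :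
    ⟪(WithLp.equiv 2 (Y × V)).symm (ζ, w), Fop G C v⟫ = ⟪w, C v⟫ - ⟪ζ, G v⟫ := by
  change ⟪(WithLp.equiv 2 (Y × V)).symm (ζ, w), (WithLp.equiv 2 (Y × V)).symm (-G v, C v)⟫ = _
  rw [WithLp.prod_inner_apply]
  simp only [WithLp.equiv_symm_apply, WithLp.ofLp_toLp, inner_neg_right]
  ring

theorem stmt3_general
    {X Y V : Type*}
    [NormedAddCommGroup X] [InnerProductSpace ℂ X] [CompleteSpace X]
    [NormedAddCommGroup Y] [InnerProductSpace ℂ Y] [CompleteSpace Y]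
    [NormedAddCommGroup V] [InnerProductSpace ℂ V] [CompleteSpace V]
    (G : X →ₗ.[ℂ] Y)
    (hdense : Dense (G.domain : Set X))
    (C : G.domain →ₗ[ℂ] V)
    (w : V) (ξ : Y)
    (hξ : ∀ v : G.domain, ⟪ξ, G v⟫ = ⟪w, C v⟫) (ζ : Y) :
    ((WithLp.equiv 2 (Y × V)).symm (ζ, w) ∈ ((Fop G C)†).domain ↔ ζ - ξ ∈ (G†).domain) ∧
    ∀ (h : (WithLp.equiv 2 (Y × V)).symm (ζ, w) ∈ ((Fop G C)†).domain)
      (h' : ξ - ζ ∈ (G†).domain),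
      (Fop G C)† ⟨(WithLp.equiv 2 (Y × V)).symm (ζ, w), h⟩ = G† ⟨ξ - ζ, h'⟩ := by
  have hinner : ∀ v (hF : v ∈ (Fop G C).domain) (hG : v ∈ G.domain),
      ⟪(WithLp.equiv 2 (Y × V)).symm (ζ, w), Fop G C ⟨v, hF⟩⟫ = ⟪ξ - ζ, G ⟨v, hG⟩⟫ :=
    fun v _ hG => (inner_Fop_apply G C ζ w ⟨v, hG⟩).trans (by rw [inner_sub_left, hξ])
  have hmem := LinearPMap.mem_adjoint_domain_iff_of_inner_eq (A := Fop G C) (B := G) rfl hinner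
  refine ⟨?_, LinearPMap.adjoint_apply_eq_of_inner_eq (A := Fop G C) (B := G) hdense rfl hinner⟩
  rw [hmem, ← neg_sub, Submodule.neg_mem_iff]

/-- **Adjoint of the operator `F` with boundary observation part** (reformulated via Riesz
representatives).  Let `G : D(G) ⊆ X → Y` be densely defined, closed and bijective onto `Y`
with bounded inverse, `C : D(G) → V` linear and graph-bounded, and `F v := (−G v, C v)`.
For `w ∈ V` let `ξ_w ∈ Y` satisfy `⟨ξ_w | Gv⟩_Y = ⟨w | Cv⟩_V` for all `v ∈ D(G)`.  Then
`(ζ, w) ∈ D(F*)` iff `ζ − ξ_w ∈ D(G*)`, and in that case `F*(ζ,w) = G*(ξ_w − ζ)`. -/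
theorem stmt3
    {X Y V : Type*}
    [NormedAddCommGroup X] [InnerProductSpace ℂ X] [CompleteSpace X]
    [NormedAddCommGroup Y] [InnerProductSpace ℂ Y] [CompleteSpace Y]
    [NormedAddCommGroup V] [InnerProductSpace ℂ V] [CompleteSpace V]
    (G : X →ₗ.[ℂ] Y)
    (hdense : Dense (G.domain : Set X))
    (hclosed : G.IsClosed)
    (hinj : ∀ x y : G.domain, G x = G y → x = y)
    (hsurj : ∀ y : Y, ∃ x : G.domain, G x = y)
    (hbdd_inv : ∃ Cg : ℝ, ∀ x : G.domain, ‖(x : X)‖ ≤ Cg * ‖G x‖)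
    (C : G.domain →ₗ[ℂ] V)
    (hC : ∃ c : ℝ, ∀ v : G.domain, ‖C v‖ ≤ c * Real.sqrt (‖(v : X)‖ ^ 2 + ‖G v‖ ^ 2))
    (w : V) (ξ : Y)
    (hξ : ∀ v : G.domain, ⟪ξ, G v⟫ = ⟪w, C v⟫) (ζ : Y) :
    ((WithLp.equiv 2 (Y × V)).symm (ζ, w) ∈ ((Fop G C)†).domain ↔ ζ - ξ ∈ (G†).domain) ∧
    ∀ (h : (WithLp.equiv 2 (Y × V)).symm (ζ, w) ∈ ((Fop G C)†).domain)
      (h' : ξ - ζ ∈ (G†).domain),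
      (Fop G C)† ⟨(WithLp.equiv 2 (Y × V)).symm (ζ, w), h⟩ = G† ⟨ξ - ζ, h'⟩ :=
  stmt3_general G hdense C w ξ hξ ζ
end

section
/- Orthogonal decomposition into minimal domain and boundary data space (Lemma 5.1): For φ ∈ D(G) the following are equivalent: (i) ⟨ψ | φ⟩_{H₀} + ⟨G̊ψ | Gφ⟩_{H₁} = 0 for all ψ ∈ D(G̊); (ii) Gφ ∈ D(D) and DGφ = φ. Consequently, in the Hilbert space D(G) endowed with the graph inner product one has the orthogonal decomposition D(G) = D(G̊) ⊕ BD(G), and analogously D(D) = D(D̊) ⊕ BD(D) with respect to the graph inner product of D(D). -/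
open scoped ComplexInnerProductSpace LinearPMap

/-- `φ` belongs to the boundary data space `BD(G) = N(1 - DG)`, i.e. `φ ∈ D(G)`,
`Gφ ∈ D(D)` and `DGφ = φ`. -/
def MemBD {H0 H1 : Type*} [AddCommGroup H0] [Module ℂ H0] [AddCommGroup H1] [Module ℂ H1]
    (G : H0 →ₗ.[ℂ] H1) (D : H1 →ₗ.[ℂ] H0) (φ : H0) : Prop :=
  ∃ (h : φ ∈ G.domain) (h' : G ⟨φ, h⟩ ∈ D.domain), D ⟨G ⟨φ, h⟩, h'⟩ = φ

/-!
Condition (i) says that `(φ, Gφ)` is orthogonal to the graph of `G̊` in `H₀ ⊕ H₁`; by the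
definition of the adjoint this means `Gφ ∈ D((G̊)*)` with `(G̊)* Gφ = -φ`, that is `DGφ = φ`.
Since `G̊` is closed, its graph is a closed subspace of the graph of `G ⊇ G̊`, and the projection
theorem splits `(φ, Gφ)` into a point of the graph of `G̊` and a point orthogonal to it, which is
the decomposition `D(G) = D(G̊) ⊕ BD(G)`. Exchanging the roles of `G̊` and `D̊` gives the same for `D`.
-/

namespace LinearPMap

variable {E F : Type*}
  [NormedAddCommGroup E] [InnerProductSpace ℂ E] [CompleteSpace E]
  [NormedAddCommGroup F] [InnerProductSpace ℂ F]
  {T A : E →ₗ.[ℂ] F}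

theorem forall_inner_add_inner_eq_zero_iff (hT : Dense (T.domain : Set E)) (x : E) (y : F) :
    (∀ z : T.domain, ⟪(z : E), x⟫ + ⟪T z, y⟫ = 0) ↔ ∃ hy : y ∈ T†.domain, T† ⟨y, hy⟩ = -x := by
  have hconj (z : T.domain) : ⟪(z : E), x⟫ + ⟪T z, y⟫ = 0 ↔ ⟪-x, (z : E)⟫ = ⟪y, T z⟫ := by
    rw [inner_neg_left, ← inner_conj_symm x (z : E), ← inner_conj_symm y (T z),
      ← _root_.map_neg (starRingEnd ℂ), (starRingEnd ℂ).injective.eq_iff, neg_eq_iff_add_eq_zero]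
  simp_rw [hconj]
  constructor
  · intro hxy
    have hy := mem_adjoint_domain_of_exists y ⟨-x, hxy⟩
    exact ⟨hy, adjoint_apply_eq hT ⟨y, hy⟩ hxy⟩
  · rintro ⟨hy, hxy⟩ z
    rw [← hxy]
    exact adjoint_isFormalAdjoint hT ⟨y, hy⟩ z

theorem forall_inner_add_inner_eq_zero_iff_memBD (hT : Dense (T.domain : Set E)) {x : E}
    (hx : x ∈ A.domain) :
    (∀ z : T.domain, ⟪(z : E), x⟫ + ⟪T z, A ⟨x, hx⟩⟫ = 0) ↔ MemBD A (-T†) x := by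
  rw [forall_inner_add_inner_eq_zero_iff hT]
  constructor
  · rintro ⟨hy, hxy⟩
    exact ⟨hx, hy, by rw [neg_apply, hxy, neg_neg]⟩
  · rintro ⟨_, hy, hxy⟩
    exact ⟨hy, neg_eq_iff_eq_neg.mp hxy⟩

theorem exists_add_forall_inner_add_inner_eq_zero [CompleteSpace F] (hT : T.IsClosed)
    (hTA : T ≤ A) (x : A.domain) :
    ∃ (x₀ : T.domain) (x₁ : A.domain), (x : E) = x₀ + x₁ ∧
      ∀ z : T.domain, ⟪(z : E), (x₁ : E)⟫ + ⟪T z, A x₁⟫ = 0 := by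
  let e := WithLp.prodContinuousLinearEquiv 2 ℂ E F
  let K : Submodule ℂ (WithLp 2 (E × F)) := T.graph.comap (e : WithLp 2 (E × F) →ₗ[ℂ] E × F)
  have : CompleteSpace K := (hT.preimage e.continuous).completeSpace_coe
  obtain ⟨p, hp, q, hq, hpq⟩ := K.exists_add_mem_mem_orthogonal (e.symm ((x : E), A x))
  obtain ⟨x₀, hx₀, -⟩ := T.mem_graph_iff.mp hp
  have hqA : e q ∈ A.graph := by
    have hq_eq : e q = ((x : E), A x) - e p := by
      rw [eq_sub_iff_add_eq', ← e.map_add, ← hpq, e.apply_symm_apply]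
    rw [hq_eq]
    exact sub_mem (A.mem_graph x) (le_graph_of_le hTA hp)
  obtain ⟨x₁, hx₁, hAx₁⟩ := A.mem_graph_iff.mp hqA
  refine ⟨x₀, x₁, ?_, fun z => ?_⟩
  · simpa [hx₀, hx₁] using congrArg (fun v => (e v).1) hpq
  · rw [hx₁, hAx₁]
    exact (Submodule.mem_orthogonal _ _).mp hq (e.symm ((z : E), T z)) (by simp [K])

theorem exists_mem_domain_add_memBD [CompleteSpace F] (hTd : Dense (T.domain : Set E))
    (hT : T.IsClosed) (hTA : T ≤ A) {x : E} (hx : x ∈ A.domain) :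
    ∃ x₀ x₁ : E, x₀ ∈ T.domain ∧ MemBD A (-T†) x₁ ∧ x = x₀ + x₁ := by
  obtain ⟨x₀, x₁, hx, hx₁⟩ := exists_add_forall_inner_add_inner_eq_zero hT hTA ⟨x, hx⟩
  exact ⟨x₀, x₁, x₀.2, (forall_inner_add_inner_eq_zero_iff_memBD hTd x₁.2).1 hx₁, hx⟩

end LinearPMap

open LinearPMap in
/-- **Orthogonal decomposition into minimal domain and boundary data space.**
With `D := −(G̊)*` and `G := −(D̊)*`: for `φ ∈ D(G)` the conditions
(i) `⟨ψ|φ⟩_{H₀} + ⟨G̊ψ|Gφ⟩_{H₁} = 0` for all `ψ ∈ D(G̊)`, and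
(ii) `Gφ ∈ D(D)` and `DGφ = φ`
are equivalent.  Consequently, in `D(G)` with the graph inner product one has the orthogonal
decomposition `D(G) = D(G̊) ⊕ BD(G)`, and analogously `D(D) = D(D̊) ⊕ BD(D)`. -/
theorem stmt5
    {H0 H1 : Type*}
    [NormedAddCommGroup H0] [InnerProductSpace ℂ H0] [CompleteSpace H0]
    [NormedAddCommGroup H1] [InnerProductSpace ℂ H1] [CompleteSpace H1]
    (G0 : H0 →ₗ.[ℂ] H1) (D0 : H1 →ₗ.[ℂ] H0)
    (hG0dense : Dense (G0.domain : Set H0)) (hD0dense : Dense (D0.domain : Set H1))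
    (hG0closed : G0.IsClosed) (hD0closed : D0.IsClosed)
    (D : H1 →ₗ.[ℂ] H0) (G : H0 →ₗ.[ℂ] H1)
    (hD : D = -(G0†)) (hG : G = -(D0†))
    (hD0D : D0 ≤ D) (hG0G : G0 ≤ G) :
    -- equivalence of (i) and (ii)
    (∀ (φ : H0) (hφ : φ ∈ G.domain),
      ((∀ ψ : G0.domain, ⟪(ψ : H0), φ⟫ + ⟪G0 ψ, G ⟨φ, hφ⟩⟫ = 0) ↔ MemBD G D φ)) ∧
    -- graph-orthogonality of `D(G̊)` and `BD(G)` in `D(G)`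
    (∀ (ψ : G0.domain) (φ : H0) (hφ : φ ∈ G.domain), MemBD G D φ →
      ⟪(ψ : H0), φ⟫ + ⟪G0 ψ, G ⟨φ, hφ⟩⟫ = 0) ∧
    -- decomposition `D(G) = D(G̊) + BD(G)`
    (∀ φ : H0, φ ∈ G.domain →
      ∃ φ₀ φ₁ : H0, φ₀ ∈ G0.domain ∧ MemBD G D φ₁ ∧ φ = φ₀ + φ₁) ∧
    -- graph-orthogonality of `D(D̊)` and `BD(D)` in `D(D)`
    (∀ (χ : D0.domain) (ψ : H1) (hψ : ψ ∈ D.domain), MemBD D G ψ →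
      ⟪(χ : H1), ψ⟫ + ⟪D0 χ, D ⟨ψ, hψ⟩⟫ = 0) ∧
    -- decomposition `D(D) = D(D̊) + BD(D)`
    (∀ ψ : H1, ψ ∈ D.domain →
      ∃ ψ₀ ψ₁ : H1, ψ₀ ∈ D0.domain ∧ MemBD D G ψ₁ ∧ ψ = ψ₀ + ψ₁) := by
  subst hD hG
  exact ⟨fun φ hφ => forall_inner_add_inner_eq_zero_iff_memBD hG0dense hφ,
    fun ψ φ hφ hφBD => (forall_inner_add_inner_eq_zero_iff_memBD hG0dense hφ).2 hφBD ψ,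
    fun φ hφ => exists_mem_domain_add_memBD hG0dense hG0closed hG0G hφ,
    fun χ ψ hψ hψBD => (forall_inner_add_inner_eq_zero_iff_memBD hD0dense hψ).2 hψBD χ,
    fun ψ hψ => exists_mem_domain_add_memBD hD0dense hD0closed hD0D hψ⟩
end

section
/- Compatibility conditions eliminate the mixed control terms (algebraic core of the proof of Theorem 4.3): Assume the compatibility conditions (M₂₂⁻¹ M₂₀)* B₂ = B₀ and (M₂₂⁻¹ M₂₁)* B₂ = B₁. Then for all v ∈ H₀, w ∈ H₁, y ∈ Y and u ∈ U satisfying M₂₀ v + M₂₁ w + M₂₂ y = B₂ u, one has Re⟨v | B₀ u⟩_{H₀} + Re⟨w | B₁ u⟩_{H₁} + Re⟨y | B₂ u⟩_Y = Re⟨B₂ u | M₂₂⁻¹ B₂ u⟩_Y. -/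
open scoped ComplexInnerProductSpace

/-- **Compatibility conditions eliminate the mixed control terms.**
Let `H0, H1, Y, U` be complex Hilbert spaces, `M20 ∈ L(H0,Y)`, `M21 ∈ L(H1,Y)` bounded
operators, `M22 ∈ L(Y)` boundedly invertible, and `B0, B1, B2` bounded.  Assume the
compatibility conditions `(M22⁻¹ M20)* B2 = B0` and `(M22⁻¹ M21)* B2 = B1`.  Then for all
`v, w, y, u` with `M20 v + M21 w + M22 y = B2 u` one has
`Re⟨v|B0 u⟩ + Re⟨w|B1 u⟩ + Re⟨y|B2 u⟩ = Re⟨B2 u|M22⁻¹ B2 u⟩`. -/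
theorem stmt7
    {H0 H1 Y U : Type*}
    [NormedAddCommGroup H0] [InnerProductSpace ℂ H0] [CompleteSpace H0]
    [NormedAddCommGroup H1] [InnerProductSpace ℂ H1] [CompleteSpace H1]
    [NormedAddCommGroup Y] [InnerProductSpace ℂ Y] [CompleteSpace Y]
    [NormedAddCommGroup U] [InnerProductSpace ℂ U] [CompleteSpace U]
    (M20 : H0 →L[ℂ] Y) (M21 : H1 →L[ℂ] Y) (M22 : Y ≃L[ℂ] Y)
    (B0 : U →L[ℂ] H0) (B1 : U →L[ℂ] H1) (B2 : U →L[ℂ] Y)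
    (hcomp0 : (ContinuousLinearMap.adjoint ((M22.symm : Y →L[ℂ] Y) ∘L M20)) ∘L B2 = B0)
    (hcomp1 : (ContinuousLinearMap.adjoint ((M22.symm : Y →L[ℂ] Y) ∘L M21)) ∘L B2 = B1) :
    ∀ (v : H0) (w : H1) (y : Y) (u : U),
      M20 v + M21 w + M22 y = B2 u →
      (⟪v, B0 u⟫).re + (⟪w, B1 u⟫).re + (⟪y, B2 u⟫).re
        = (⟪B2 u, (M22.symm : Y →L[ℂ] Y) (B2 u)⟫).re := by
  intro v w y u h
  have h0 : ⟪v, B0 u⟫ = ⟪(M22.symm : Y →L[ℂ] Y) (M20 v), B2 u⟫ := by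
    rw [← hcomp0]
    simp [ContinuousLinearMap.adjoint_inner_right]
  have h1 : ⟪w, B1 u⟫ = ⟪(M22.symm : Y →L[ℂ] Y) (M21 w), B2 u⟫ := by
    rw [← hcomp1]
    simp [ContinuousLinearMap.adjoint_inner_right]
  have hy : (M22.symm : Y →L[ℂ] Y) (M20 v) + (M22.symm : Y →L[ℂ] Y) (M21 w) + y
      = (M22.symm : Y →L[ℂ] Y) (B2 u) := by
    have := congrArg (M22.symm : Y →L[ℂ] Y) h
    simpa [map_add] using this
  have key : ⟪v, B0 u⟫ + ⟪w, B1 u⟫ + ⟪y, B2 u⟫ = ⟪(M22.symm : Y →L[ℂ] Y) (B2 u), B2 u⟫ := by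
    rw [h0, h1, ← inner_add_left, ← inner_add_left, hy]
  have := congrArg Complex.re key
  simp only [Complex.add_re] at this
  rw [this]; exact inner_re_symm (𝕜 := ℂ) _ _
end

section
/- Abstract Green/boundary-triple identity (Remark 5.11): For all u, x ∈ D(G) and all v, y ∈ D(D) one has ⟨Dv | x⟩_{H₀} + ⟨Gu | y⟩_{H₁} + ⟨u | Dy⟩_{H₀} + ⟨v | Gx⟩_{H₁} = ( ⟨D(P_D v) | P_G x⟩_{H₀} + ⟨G D(P_D v) | G(P_G x)⟩_{H₁} ) + ( ⟨P_G u | D(P_D y)⟩_{H₀} + ⟨G(P_G u) | G D(P_D y)⟩_{H₁} ). In particular, setting S := −i(0, D̊; G̊, 0) on H₀ ⊕ H₁ (so that S* (u,v) = −i(Dv, Gu)), K := BD(G) with the graph inner product, Γ₀(u,v) := P_G u and Γ₁(u,v) := i D(P_D v), one obtains ⟨S*(u,v) | (x,y)⟩ − ⟨(u,v) | S*(x,y)⟩ = ⟨Γ₀(u,v) | Γ₁(x,y)⟩_K − ⟨Γ₁(u,v) | Γ₀(x,y)⟩_K, i.e. (K, Γ₀, Γ₁) is a boundary triple for S. -/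
open scoped ComplexInnerProductSpace LinearPMap

/-- **Abstract Green/boundary-triple identity.**
With `D := −(G̊)*`, `G := −(D̊)*`, and `P_G, P_D` the graph-orthogonal projections onto
`BD(G)`, `BD(D)` (here encoded by the unique decompositions `u = (u − u_b) + u_b` with
`u − u_b ∈ D(G̊)`, `u_b ∈ BD(G)`, so that `P_G u = u_b`, and analogously for `D`):
for all `u, x ∈ D(G)` and `v, y ∈ D(D)`,
`⟨Dv|x⟩ + ⟨Gu|y⟩ + ⟨u|Dy⟩ + ⟨v|Gx⟩
  = (⟨D(P_D v)|P_G x⟩ + ⟨GD(P_D v)|G(P_G x)⟩) + (⟨P_G u|D(P_D y)⟩ + ⟨G(P_G u)|GD(P_D y)⟩)`,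
and the boundary-triple identity
`⟨S*(u,v)|(x,y)⟩ − ⟨(u,v)|S*(x,y)⟩ = ⟨Γ₀(u,v)|Γ₁(x,y)⟩_K − ⟨Γ₁(u,v)|Γ₀(x,y)⟩_K`
holds, where `S*(u,v) = −i(Dv, Gu)`, `Γ₀(u,v) = P_G u`, `Γ₁(u,v) = i·D(P_D v)` and
`K = BD(G)` carries the graph inner product. -/
theorem stmt10
    {H0 H1 : Type*}
    [NormedAddCommGroup H0] [InnerProductSpace ℂ H0] [CompleteSpace H0]
    [NormedAddCommGroup H1] [InnerProductSpace ℂ H1] [CompleteSpace H1]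
    (G0 : H0 →ₗ.[ℂ] H1) (D0 : H1 →ₗ.[ℂ] H0)
    (hG0dense : Dense (G0.domain : Set H0)) (hD0dense : Dense (D0.domain : Set H1))
    (hG0closed : G0.IsClosed) (hD0closed : D0.IsClosed)
    (D : H1 →ₗ.[ℂ] H0) (G : H0 →ₗ.[ℂ] H1)
    (hD : D = -(G0†)) (hG : G = -(D0†))
    (hD0D : D0 ≤ D) (hG0G : G0 ≤ G)
    -- `u, x ∈ D(G)` and `v, y ∈ D(D)`
    (u x : H0) (hu : u ∈ G.domain) (hx : x ∈ G.domain)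
    (v y : H1) (hv : v ∈ D.domain) (hy : y ∈ D.domain)
    -- `u_b = P_G u`, `x_b = P_G x`: the `BD(G)`-components of `u` and `x`
    (ub xb : H0) (hub : ub ∈ G.domain) (hxb : xb ∈ G.domain)
    (hubBD : MemBD G D ub) (hxbBD : MemBD G D xb)
    (huf : u - ub ∈ G0.domain) (hxf : x - xb ∈ G0.domain)
    -- `v_b = P_D v`, `y_b = P_D y`: the `BD(D)`-components of `v` and `y`
    (vb yb : H1) (hvb : vb ∈ D.domain) (hyb : yb ∈ D.domain)
    (hvbBD : MemBD D G vb) (hybBD : MemBD D G yb)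
    (hvf : v - vb ∈ D0.domain) (hyf : y - yb ∈ D0.domain)
    -- memberships needed to apply `G` after `D`
    (hDvb : D ⟨vb, hvb⟩ ∈ G.domain) (hDyb : D ⟨yb, hyb⟩ ∈ G.domain) :
    -- the abstract Green identity
    (⟪D ⟨v, hv⟩, x⟫ + ⟪G ⟨u, hu⟩, y⟫ + ⟪u, D ⟨y, hy⟩⟫ + ⟪v, G ⟨x, hx⟩⟫
      = (⟪D ⟨vb, hvb⟩, xb⟫ + ⟪G ⟨D ⟨vb, hvb⟩, hDvb⟩, G ⟨xb, hxb⟩⟫)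
        + (⟪ub, D ⟨yb, hyb⟩⟫ + ⟪G ⟨ub, hub⟩, G ⟨D ⟨yb, hyb⟩, hDyb⟩⟫)) ∧
    -- the boundary-triple identity
    ((⟪(-Complex.I) • D ⟨v, hv⟩, x⟫ + ⟪(-Complex.I) • G ⟨u, hu⟩, y⟫)
        - (⟪u, (-Complex.I) • D ⟨y, hy⟩⟫ + ⟪v, (-Complex.I) • G ⟨x, hx⟩⟫)
      = (⟪ub, Complex.I • D ⟨yb, hyb⟩⟫
          + ⟪G ⟨ub, hub⟩, Complex.I • G ⟨D ⟨yb, hyb⟩, hDyb⟩⟫)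
        - (⟪Complex.I • D ⟨vb, hvb⟩, xb⟫
          + ⟪Complex.I • G ⟨D ⟨vb, hvb⟩, hDvb⟩, G ⟨xb, hxb⟩⟫)) := by
  subst hD hG
  -- key vanishing lemma 1: pairing vanishes when the H0-vector is in D(G0)
  have key1 : ∀ (w : H1) (hw : w ∈ (-(G0†)).domain) (z : H0) (hz0 : z ∈ G0.domain)
      (hz : z ∈ (-(D0†)).domain),
      ⟪(-(G0†)) ⟨w, hw⟩, z⟫ + ⟪w, (-(D0†)) ⟨z, hz⟩⟫ = 0 := by
    intro w hw z hz0 hz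
    have e1 : ⟪(-(G0†)) ⟨w, hw⟩, z⟫ = -⟪w, G0 ⟨z, hz0⟩⟫ := by
      rw [LinearPMap.neg_apply, inner_neg_left,
        LinearPMap.adjoint_isFormalAdjoint hG0dense ⟨w, hw⟩ ⟨z, hz0⟩]
    have e2 : (-(D0†)) ⟨z, hz⟩ = G0 ⟨z, hz0⟩ := (hG0G.2 rfl).symm
    rw [e1, e2]; ring
  -- key vanishing lemma 2: pairing vanishes when the H1-vector is in D(D0)
  have key2 : ∀ (w : H1) (hw0 : w ∈ D0.domain) (hw : w ∈ (-(G0†)).domain)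
      (z : H0) (hz : z ∈ (-(D0†)).domain),
      ⟪(-(G0†)) ⟨w, hw⟩, z⟫ + ⟪w, (-(D0†)) ⟨z, hz⟩⟫ = 0 := by
    intro w hw0 hw z hz
    have e1 : (-(G0†)) ⟨w, hw⟩ = D0 ⟨w, hw0⟩ := (hD0D.2 rfl).symm
    have e2 : ⟪w, (-(D0†)) ⟨z, hz⟩⟫ = -⟪D0 ⟨w, hw0⟩, z⟫ := by
      rw [LinearPMap.neg_apply, inner_neg_right, ← inner_conj_symm,
        LinearPMap.adjoint_isFormalAdjoint hD0dense ⟨z, hz⟩ ⟨w, hw0⟩, inner_conj_symm]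
    rw [e1, e2]; ring
  -- conjugated version for the (u, y) pairing
  have key1' : ∀ (z : H0) (hz0 : z ∈ G0.domain) (hz : z ∈ (-(D0†)).domain)
      (w : H1) (hw : w ∈ (-(G0†)).domain),
      ⟪z, (-(G0†)) ⟨w, hw⟩⟫ + ⟪(-(D0†)) ⟨z, hz⟩, w⟫ = 0 := by
    intro z hz0 hz w hw
    have := key1 w hw z hz0 hz
    have h2 : (starRingEnd ℂ) (⟪(-(G0†)) ⟨w, hw⟩, z⟫ + ⟪w, (-(D0†)) ⟨z, hz⟩⟫) = 0 := by
      rw [this]; simp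
    rw [map_add, inner_conj_symm, inner_conj_symm] at h2
    exact h2
  have key2' : ∀ (z : H0) (hz : z ∈ (-(D0†)).domain) (w : H1) (hw0 : w ∈ D0.domain)
      (hw : w ∈ (-(G0†)).domain),
      ⟪z, (-(G0†)) ⟨w, hw⟩⟫ + ⟪(-(D0†)) ⟨z, hz⟩, w⟫ = 0 := by
    intro z hz w hw0 hw
    have h2 : (starRingEnd ℂ) (⟪(-(G0†)) ⟨w, hw⟩, z⟫ + ⟪w, (-(D0†)) ⟨z, hz⟩⟫) = 0 := by
      rw [key2 w hw0 hw z hz]; simp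
    rw [map_add, inner_conj_symm, inner_conj_symm] at h2
    exact h2
  -- decompose u, x, v, y
  obtain ⟨a, rfl⟩ : ∃ a, v = a + vb := ⟨v - vb, (sub_add_cancel v vb).symm⟩
  obtain ⟨c, rfl⟩ : ∃ c, x = c + xb := ⟨x - xb, (sub_add_cancel x xb).symm⟩
  obtain ⟨b, rfl⟩ : ∃ b, u = b + ub := ⟨u - ub, (sub_add_cancel u ub).symm⟩
  obtain ⟨d, rfl⟩ : ∃ d, y = d + yb := ⟨y - yb, (sub_add_cancel y yb).symm⟩
  have ha0 : a ∈ D0.domain := by simpa using hvf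
  have hc0 : c ∈ G0.domain := by simpa using hxf
  have hb0 : b ∈ G0.domain := by simpa using huf
  have hd0 : d ∈ D0.domain := by simpa using hyf
  have haD : a ∈ (-(G0†)).domain := hD0D.1 ha0
  have hcG : c ∈ (-(D0†)).domain := hG0G.1 hc0
  have hbG : b ∈ (-(D0†)).domain := hG0G.1 hb0
  have hdD : d ∈ (-(G0†)).domain := hD0D.1 hd0
  -- split applications
  have eDv : (-(G0†)) ⟨a + vb, hv⟩ = (-(G0†)) ⟨a, haD⟩ + (-(G0†)) ⟨vb, hvb⟩ := by
    rw [← LinearPMap.map_add]; rfl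
  have eDy : (-(G0†)) ⟨d + yb, hy⟩ = (-(G0†)) ⟨d, hdD⟩ + (-(G0†)) ⟨yb, hyb⟩ := by
    rw [← LinearPMap.map_add]; rfl
  have eGx : (-(D0†)) ⟨c + xb, hx⟩ = (-(D0†)) ⟨c, hcG⟩ + (-(D0†)) ⟨xb, hxb⟩ := by
    rw [← LinearPMap.map_add]; rfl
  have eGu : (-(D0†)) ⟨b + ub, hu⟩ = (-(D0†)) ⟨b, hbG⟩ + (-(D0†)) ⟨ub, hub⟩ := by
    rw [← LinearPMap.map_add]; rfl
  -- boundary data identities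
  obtain ⟨h1, h2, hvbeq⟩ := hvbBD
  obtain ⟨h3, h4, hybeq⟩ := hybBD
  have ebd1 : ⟪(-(D0†)) ⟨(-(G0†)) ⟨vb, hvb⟩, hDvb⟩, (-(D0†)) ⟨xb, hxb⟩⟫
      = ⟪vb, (-(D0†)) ⟨xb, hxb⟩⟫ := by
    have h : (-(D0†)) ⟨(-(G0†)) ⟨vb, hvb⟩, hDvb⟩ = vb := hvbeq
    rw [h]
  have ebd2 : ⟪(-(D0†)) ⟨ub, hub⟩, (-(D0†)) ⟨(-(G0†)) ⟨yb, hyb⟩, hDyb⟩⟫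
      = ⟪(-(D0†)) ⟨ub, hub⟩, yb⟫ := by
    have h : (-(D0†)) ⟨(-(G0†)) ⟨yb, hyb⟩, hDyb⟩ = yb := hybeq
    rw [h]
  -- the Green identity
  have green : ⟪(-(G0†)) ⟨a + vb, hv⟩, c + xb⟫ + ⟪(-(D0†)) ⟨b + ub, hu⟩, d + yb⟫
      + ⟪b + ub, (-(G0†)) ⟨d + yb, hy⟩⟫ + ⟪a + vb, (-(D0†)) ⟨c + xb, hx⟩⟫
      = (⟪(-(G0†)) ⟨vb, hvb⟩, xb⟫
          + ⟪(-(D0†)) ⟨(-(G0†)) ⟨vb, hvb⟩, hDvb⟩, (-(D0†)) ⟨xb, hxb⟩⟫)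
        + (⟪ub, (-(G0†)) ⟨yb, hyb⟩⟫
          + ⟪(-(D0†)) ⟨ub, hub⟩, (-(D0†)) ⟨(-(G0†)) ⟨yb, hyb⟩, hDyb⟩⟫) := by
    simp only [eDv, eDy, eGx, eGu, inner_add_left, inner_add_right, ebd1, ebd2]
    linear_combination key2 a ha0 haD c hcG + key2 a ha0 haD xb hxb
      + key1 vb hvb c hc0 hcG
      + key1' b hb0 hbG d hdD + key1' b hb0 hbG yb hyb
      + key2' ub hub d hd0 hdD
  refine ⟨green, ?_⟩
  simp only [inner_smul_left, inner_smul_right, map_neg, Complex.conj_I]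
  linear_combination Complex.I * green
end
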